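/- Let E₁ and E₂ be finite-dimensional Euclidean (real inner product) spaces, μ a probability measure on E₁, and f : E₁ × E₂ → ℝ a function such that for every x ∈ E₁, the map y ↦ f(x,y) belongs to F(C,ε) on E₂. Define φ : E₂ → ℝ ∪ {−∞} by e^{−φ(y)} = ∫_{E₁} e^{−f(x,y)} dμ(x). Then, unless φ is identically −∞, φ belongs to F(C,ε) on E₂. -/

import Mathlib

/-!
Write `Z(y) = ∫ e^{-f(x,y)} dμ(x)`, so that `φ = -log Z`. If every `f(x,·)` is `K`-Lipschitz, then
`e^{-f(x,y)} ≤ e^{K|y-z|} e^{-f(x,z)}` integrates to `Z(y) ≤ e^{K|y-z|} Z(z)`: `Z` is finite everywhere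
once it is finite somewhere, and `φ` is `K`-Lipschitz. For the second differences, the pointwise
bound `e^{-f(x,y)} ≤ e^{c/2} e^{-f(x,y+h)/2} e^{-f(x,y-h)/2}` and Cauchy–Schwarz give
`Z(y)² ≤ e^c Z(y+h) Z(y-h)`, i.e. `φ(y+h) + φ(y-h) - 2φ(y) ≤ c`.
-/

open MeasureTheory Real

/-- The class `F(C,ε)` on a Euclidean space `E`: functions that are `Cε`-Lipschitz
and satisfy `f(y+h) + f(y-h) - 2f(y) ≤ Cε²|h|²` for all `y, h`. -/
def memF {E : Type*} [NormedAddCommGroup E] (C ε : ℝ) (f : E → ℝ) : Prop :=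
  LipschitzWith (C * ε).toNNReal f ∧
    ∀ y h : E, f (y + h) + f (y - h) - 2 * f y ≤ C * ε ^ 2 * ‖h‖ ^ 2

open scoped ENNReal NNReal

lemma ofReal_exp_half_rpow_two (t : ℝ) :
    ENNReal.ofReal (exp (t / 2)) ^ (2 : ℝ) = ENNReal.ofReal (exp t) := by
  rw [ENNReal.rpow_two, ← ENNReal.ofReal_pow (exp_nonneg _), ← exp_nat_mul]
  norm_num [mul_div_cancel₀]

lemma log_toReal_le_add_log_toReal {a b : ℝ≥0∞} {t : ℝ} (ha : a ≠ 0) (hb : b ≠ ∞)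
    (h : a ≤ ENNReal.ofReal (exp t) * b) : log a.toReal ≤ t + log b.toReal := by
  have hb0 : b ≠ 0 := by rintro rfl; simp_all
  have hreal : a.toReal ≤ exp t * b.toReal := by
    simpa [ENNReal.toReal_mul, exp_nonneg] using
      ENNReal.toReal_mono (ENNReal.mul_ne_top ENNReal.ofReal_ne_top hb) h
  have ha' : a ≠ ∞ := ne_top_of_le_ne_top (ENNReal.mul_ne_top ENNReal.ofReal_ne_top hb) h
  calc log a.toReal ≤ log (exp t * b.toReal) :=
        log_le_log (ENNReal.toReal_pos ha ha') hreal
    _ = t + log b.toReal := by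
        rw [log_mul (exp_ne_zero _) (ENNReal.toReal_ne_zero.2 ⟨hb0, hb⟩), log_exp]

section PartitionFunction

variable {α E : Type*} [MeasurableSpace α] {μ : Measure α} {f : α → E → ℝ}

noncomputable def partitionFunction (μ : Measure α) (f : α → E → ℝ) (y : E) : ℝ≥0∞ :=
  ∫⁻ x, ENNReal.ofReal (exp (-f x y)) ∂μ

lemma partitionFunction_pos [NeZero μ] {y : E} (hf : Measurable fun x => f x y) :
    0 < partitionFunction μ f y := by
  have hmeas : Measurable fun x => ENNReal.ofReal (exp (-f x y)) := hf.neg.exp.ennreal_ofReal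
  rw [partitionFunction, lintegral_pos_iff_support hmeas]
  simp [Function.support, exp_pos, NeZero.ne μ]

lemma partitionFunction_le_mul_of_le {y z : E} {d : ℝ} (h : ∀ x, f x z ≤ f x y + d) :
    partitionFunction μ f y ≤ ENNReal.ofReal (exp d) * partitionFunction μ f z := by
  rw [partitionFunction, partitionFunction, ← lintegral_const_mul' _ _ ENNReal.ofReal_ne_top]
  refine lintegral_mono fun x => ?_
  rw [← ENNReal.ofReal_mul (exp_nonneg _), ← exp_add]
  exact ENNReal.ofReal_le_ofReal (exp_le_exp.2 (by linarith [h x]))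

lemma sq_partitionFunction_le {a b m : E} {c : ℝ} (ha : Measurable fun x => f x a)
    (hb : Measurable fun x => f x b) (h : ∀ x, f x a + f x b - 2 * f x m ≤ c) :
    partitionFunction μ f m ^ 2 ≤
      ENNReal.ofReal (exp c) * (partitionFunction μ f a * partitionFunction μ f b) := by
  set u : α → ℝ≥0∞ := fun x => ENNReal.ofReal (exp (-f x a / 2))
  set v : α → ℝ≥0∞ := fun x => ENNReal.ofReal (exp (-f x b / 2))
  have hpoint : partitionFunction μ f m ≤ ENNReal.ofReal (exp (c / 2)) * ∫⁻ x, (u * v) x ∂μ := by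
    rw [partitionFunction, ← lintegral_const_mul' _ _ ENNReal.ofReal_ne_top]
    refine lintegral_mono fun x => ?_
    simp only [Pi.mul_apply, u, v, ← ENNReal.ofReal_mul (exp_nonneg _), ← exp_add]
    exact ENNReal.ofReal_le_ofReal (exp_le_exp.2 (by linarith [h x]))
  have hCS : ∫⁻ x, (u * v) x ∂μ ≤
      partitionFunction μ f a ^ (1 / 2 : ℝ) * partitionFunction μ f b ^ (1 / 2 : ℝ) := by
    simpa only [partitionFunction, u, v, ofReal_exp_half_rpow_two] using
      ENNReal.lintegral_mul_le_Lp_mul_Lq μ HolderConjugate.two_two (f := u) (g := v)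
        (ha.neg.div_const 2).exp.ennreal_ofReal.aemeasurable
        (hb.neg.div_const 2).exp.ennreal_ofReal.aemeasurable
  have hsqrt_sq (z : ℝ≥0∞) : (z ^ (1 / 2 : ℝ)) ^ 2 = z := by
    rw [← ENNReal.rpow_natCast, ← ENNReal.rpow_mul]
    norm_num
  calc partitionFunction μ f m ^ 2
      ≤ (ENNReal.ofReal (exp (c / 2)) *
          (partitionFunction μ f a ^ (1 / 2 : ℝ) * partitionFunction μ f b ^ (1 / 2 : ℝ))) ^ 2 := by
        gcongr
        exact hpoint.trans (by gcongr)
    _ = ENNReal.ofReal (exp c) * (partitionFunction μ f a * partitionFunction μ f b) := by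
        rw [mul_pow, mul_pow, ← ENNReal.rpow_two, ofReal_exp_half_rpow_two, hsqrt_sq, hsqrt_sq]

noncomputable def freeEnergy (μ : Measure α) (f : α → E → ℝ) (y : E) : ℝ :=
  -log (partitionFunction μ f y).toReal

lemma freeEnergy_add_sub_two_mul_le {a b m : E} {c : ℝ} (ha : Measurable fun x => f x a)
    (hb : Measurable fun x => f x b) (ha0 : partitionFunction μ f a ≠ 0)
    (hb0 : partitionFunction μ f b ≠ 0) (hm0 : partitionFunction μ f m ≠ 0)
    (ha_top : partitionFunction μ f a ≠ ∞) (hb_top : partitionFunction μ f b ≠ ∞)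
    (h : ∀ x, f x a + f x b - 2 * f x m ≤ c) :
    freeEnergy μ f a + freeEnergy μ f b - 2 * freeEnergy μ f m ≤ c := by
  have hlog := log_toReal_le_add_log_toReal (pow_ne_zero 2 hm0)
    (ENNReal.mul_ne_top ha_top hb_top) (sq_partitionFunction_le ha hb h)
  rw [ENNReal.toReal_pow, ENNReal.toReal_mul, log_pow,
    log_mul (ENNReal.toReal_ne_zero.2 ⟨ha0, ha_top⟩) (ENNReal.toReal_ne_zero.2 ⟨hb0, hb_top⟩)]
    at hlog
  simp only [freeEnergy]
  push_cast at hlog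
  linarith

variable [PseudoMetricSpace E] {K : ℝ≥0}

lemma partitionFunction_ne_top_of_lipschitzWith (hf : ∀ x, LipschitzWith K (f x)) {z : E}
    (hz : partitionFunction μ f z ≠ ∞) (y : E) : partitionFunction μ f y ≠ ∞ :=
  ne_top_of_le_ne_top (ENNReal.mul_ne_top ENNReal.ofReal_ne_top hz)
    (partitionFunction_le_mul_of_le fun x => (hf x).le_add_mul z y)

lemma lipschitzWith_freeEnergy (hf : ∀ x, LipschitzWith K (f x))
    (h0 : ∀ y, partitionFunction μ f y ≠ 0) (htop : ∀ y, partitionFunction μ f y ≠ ∞) :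
    LipschitzWith K (freeEnergy μ f) :=
  LipschitzWith.of_le_add_mul K fun y z => by
    have := log_toReal_le_add_log_toReal (h0 z) (htop y)
      (partitionFunction_le_mul_of_le fun x => (hf x).le_add_mul y z)
    simp only [freeEnergy]
    linarith

end PartitionFunction

theorem integrated_memF_general {E₁ E₂ : Type*}
    [MeasurableSpace E₁]
    [NormedAddCommGroup E₂]
    (C ε : ℝ)
    (μ : Measure E₁) [IsProbabilityMeasure μ]
    (f : E₁ → E₂ → ℝ) (hmeas : ∀ y, Measurable fun x => f x y)
    (hF : ∀ x, memF C ε (f x))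
    (hfin : ∃ y, (∫⁻ x, ENNReal.ofReal (Real.exp (-f x y)) ∂μ) ≠ ⊤) :
    memF C ε fun y =>
      -Real.log (∫⁻ x, ENNReal.ofReal (Real.exp (-f x y)) ∂μ).toReal := by
  obtain ⟨y₀, hy₀⟩ := hfin
  have hlip (x : E₁) := (hF x).1
  have hne_top := partitionFunction_ne_top_of_lipschitzWith hlip hy₀
  have hne_zero (y : E₂) := (partitionFunction_pos (μ := μ) (hmeas y)).ne'
  exact ⟨lipschitzWith_freeEnergy hlip hne_zero hne_top, fun y h =>
    freeEnergy_add_sub_two_mul_le (hmeas _) (hmeas _) (hne_zero _) (hne_zero _) (hne_zero y)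
      (hne_top _) (hne_top _) fun x => (hF x).2 y h⟩

/-- If `μ` is a probability measure on `E₁` and `y ↦ f(x,y)` belongs to `F(C,ε)` for
every `x`, then `φ` defined by `e^{-φ(y)} = ∫ e^{-f(x,y)} dμ(x)` belongs to `F(C,ε)`,
unless `φ ≡ -∞` (i.e. provided the integral is finite somewhere). -/
theorem integrated_memF {E₁ E₂ : Type*}
    [NormedAddCommGroup E₁] [InnerProductSpace ℝ E₁] [FiniteDimensional ℝ E₁]
    [MeasurableSpace E₁] [BorelSpace E₁]
    [NormedAddCommGroup E₂] [InnerProductSpace ℝ E₂] [FiniteDimensional ℝ E₂]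
    (C ε : ℝ) (hC : 0 < C) (hε : ε ∈ Set.Ioc (0 : ℝ) 1)
    (μ : Measure E₁) [IsProbabilityMeasure μ]
    (f : E₁ → E₂ → ℝ) (hmeas : ∀ y, Measurable fun x => f x y)
    (hF : ∀ x, memF C ε (f x))
    (hfin : ∃ y, (∫⁻ x, ENNReal.ofReal (Real.exp (-f x y)) ∂μ) ≠ ⊤) :
    memF C ε fun y =>
      -Real.log (∫⁻ x, ENNReal.ofReal (Real.exp (-f x y)) ∂μ).toReal :=
  integrated_memF_general C ε μ f hmeas hF hfin
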